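/- arXiv:2104.13286 — 5 statements merged into one kernel-verified Lean document; each statement's English description precedes it below -/
import Mathlib

section
/- Let E/F be a finite extension of p-adic fields with ramification index e, uniformizers ϖ_E and ϖ_F, and suppose E/F is Galois with cyclic Galois group generated by θ. For a positive integer m write m = ke + r with k ≥ 0 and 0 ≤ r < e, and let K_E(m) = I_n + ϖ_E^m M_n(O_E) and K_F(m) = I_n + ϖ_F^m M_n(O_F). Then the θ-fixed part of K_E(m) equals K_F(k+1) if r ≠ 0 and equals K_F(k) if r = 0. -/
/-!
Since `θ` generates the Galois group, a `θ`-fixed matrix has its entries in `F`. A nonzero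
`x ∈ F` has norm `‖ϖ_F‖ ^ j = ‖ϖ_E‖ ^ (e j)` for some `j : ℤ`, so `‖x‖ ≤ ‖ϖ_E‖ ^ m` says
`e j ≥ m = k e + r`, i.e. `j ≥ ⌈m / e⌉`, which is `k` if `r = 0` and `k + 1` otherwise.
-/

theorem exists_norm_eq_zpow_of_forall_norm_lt_one {K : Type*} [NormedField K] {ϖ : K}
    (hϖ0 : ϖ ≠ 0) (hϖ1 : ‖ϖ‖ < 1) (hmax : ∀ x : K, ‖x‖ < 1 → ‖x‖ ≤ ‖ϖ‖) {x : K} (hx : x ≠ 0) :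
    ∃ j : ℤ, ‖x‖ = ‖ϖ‖ ^ j := by
  have hpos : 0 < ‖ϖ‖ := norm_pos_iff.mpr hϖ0
  obtain ⟨n, hlo, hhi⟩ :=
    exists_mem_Ioc_zpow (norm_pos_iff.mpr hx) (one_lt_inv_iff₀.mpr ⟨hpos, hϖ1⟩)
  set y := x * ϖ ^ (n + 1)
  have hy : ‖y‖ = ‖x‖ * ‖ϖ‖ ^ (n + 1) := by rw [norm_mul, norm_zpow]
  have hpow : 0 < ‖ϖ‖ ^ (n + 1) := zpow_pos hpos _
  rw [inv_zpow, ← zpow_neg] at hlo hhi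
  have hy_le : ‖y‖ ≤ 1 := by
    rw [hy, ← le_div_iff₀ hpow, one_div, ← zpow_neg]; exact hhi
  have hy_gt : ‖ϖ‖ < ‖y‖ := by
    rw [hy, ← div_lt_iff₀ hpow, div_eq_mul_inv, ← zpow_neg, ← zpow_one_add₀ hpos.ne']
    convert hlo using 2; ring
  have hy1 : ‖y‖ = 1 := hy_le.eq_or_lt.resolve_right fun h => (hmax y h).not_gt hy_gt
  refine ⟨-(n + 1), ?_⟩
  rw [zpow_neg]; exact eq_inv_of_mul_eq_one_left (hy.symm.trans hy1)

theorem le_mul_iff_le_of_eq_mul_add {e m k r : ℕ} (hr : r < e) (hkr : m = k * e + r) (j : ℤ) :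
    (m : ℤ) ≤ j * e ↔ ((if r = 0 then k else k + 1 : ℕ) : ℤ) ≤ j := by
  subst hkr
  split_ifs with hr0
  · subst hr0
    push_cast
    rw [add_zero]
    exact mul_le_mul_iff_of_pos_right (by exact_mod_cast hr : (0 : ℤ) < e)
  · have : 0 < r := Nat.pos_of_ne_zero hr0
    push_cast
    constructor
    · intro h
      by_contra! hj
      nlinarith
    · intro h
      nlinarith

theorem pow_zpow_le_pow_iff {q : ℝ} (hq0 : 0 < q) (hq1 : q < 1) {e m k r : ℕ} (hr : r < e)
    (hkr : m = k * e + r) (j : ℤ) :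
    (q ^ e) ^ j ≤ q ^ m ↔ (q ^ e) ^ j ≤ (q ^ e) ^ (if r = 0 then k else k + 1) := by
  simp only [← zpow_natCast, ← zpow_mul]
  have he : (0 : ℤ) < e := by omega
  rw [zpow_le_zpow_iff_right_of_lt_one₀ hq0 hq1, zpow_le_zpow_iff_right_of_lt_one₀ hq0 hq1,
    mul_le_mul_iff_of_pos_left he, mul_comm, le_mul_iff_le_of_eq_mul_add hr hkr]

theorem norm_le_pow_iff_norm_le_pow_of_norm_eq_pow {K : Type*} [NormedField K] {ϖ : K}
    (hϖ0 : ϖ ≠ 0) (hϖ1 : ‖ϖ‖ < 1) (hmax : ∀ x : K, ‖x‖ < 1 → ‖x‖ ≤ ‖ϖ‖) {q : ℝ}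
    (hq0 : 0 < q) (hq1 : q < 1) {e m k r : ℕ} (hϖ : ‖ϖ‖ = q ^ e) (hr : r < e)
    (hkr : m = k * e + r) (x : K) :
    ‖x‖ ≤ q ^ m ↔ ‖x‖ ≤ ‖ϖ‖ ^ (if r = 0 then k else k + 1) := by
  rcases eq_or_ne x 0 with rfl | hx
  · simp only [norm_zero]
    exact iff_of_true (by positivity) (by positivity)
  obtain ⟨j, hj⟩ := exists_norm_eq_zpow_of_forall_norm_lt_one hϖ0 hϖ1 hmax hx
  rw [hj, hϖ]
  exact pow_zpow_le_pow_iff hq0 hq1 hr hkr j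

theorem AlgEquiv.mem_range_algebraMap_of_apply_eq {F E : Type*} [Field F] [Field E] [Algebra F E]
    [IsGalois F E] {θ : E ≃ₐ[F] E} (hθ : ∀ σ : E ≃ₐ[F] E, σ ∈ Subgroup.zpowers θ) {x : E}
    (hx : θ x = x) : x ∈ Set.range (algebraMap F E) :=
  (InfiniteGalois.mem_range_algebraMap_iff_fixed x).mpr fun σ =>
    Subgroup.zpowers_le.mpr (show θ ∈ MulAction.stabilizer _ x from hx) (hθ σ)

namespace Matrix

section

variable {ι κ F E : Type*} [Field F] [Field E] [Algebra F E]

theorem exists_map_algebraMap_eq_of_map_eq [IsGalois F E] {θ : E ≃ₐ[F] E}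
    (hθ : ∀ σ : E ≃ₐ[F] E, σ ∈ Subgroup.zpowers θ) {A : Matrix ι κ E} (hA : A.map θ = A) :
    ∃ B : Matrix ι κ F, B.map (algebraMap F E) = A := by
  choose B hB using fun i j =>
    AlgEquiv.mem_range_algebraMap_of_apply_eq hθ (congrFun₂ hA i j)
  exact ⟨of B, ext hB⟩

theorem map_algebraMap_map_algEquiv (B : Matrix ι κ F) (θ : E ≃ₐ[F] E) :
    (B.map (algebraMap F E)).map θ = B.map (algebraMap F E) := by
  ext i j
  exact θ.commutes (B i j)

end

theorem norm_map_sub_one_apply {ι F E : Type*} [DecidableEq ι] [NormedField F]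
    [NormedField E] (f : F →+* E) (hf : ∀ x, ‖f x‖ = ‖x‖) (B : Matrix ι ι F) (i j : ι) :
    ‖(B.map f - 1) i j‖ = ‖(B - 1) i j‖ := by
  rw [← hf, ← Matrix.map_one f (map_zero f) (map_one f), ← Matrix.map_sub f (map_sub f)]
  rfl

end Matrix

theorem stmt0_general (n : ℕ)
    (F E : Type*) [NontriviallyNormedField F] [NontriviallyNormedField E]
    [Algebra F E] [IsGalois F E]
    (hiso : ∀ x : F, ‖algebraMap F E x‖ = ‖x‖)
    (θ : E ≃ₐ[F] E) (hθgen : ∀ σ : E ≃ₐ[F] E, σ ∈ Subgroup.zpowers θ)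
    (ϖE : E) (hE0 : ϖE ≠ 0) (hE1 : ‖ϖE‖ < 1)
    (ϖF : F) (hF0 : ϖF ≠ 0) (hF1 : ‖ϖF‖ < 1) (hFmax : ∀ x : F, ‖x‖ < 1 → ‖x‖ ≤ ‖ϖF‖)
    (e : ℕ) (hram : ‖algebraMap F E ϖF‖ = ‖ϖE‖ ^ e)
    (m k r : ℕ) (hr : r < e) (hkr : m = k * e + r) :
    {A : Matrix (Fin n) (Fin n) E |
        (∀ i j, ‖(A - 1) i j‖ ≤ ‖ϖE‖ ^ m) ∧ A.map ⇑θ = A} =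
      (fun B : Matrix (Fin n) (Fin n) F => B.map (algebraMap F E)) ''
        {B : Matrix (Fin n) (Fin n) F |
          ∀ i j, ‖(B - 1) i j‖ ≤ ‖ϖF‖ ^ (if r = 0 then k else k + 1)} := by
  have hϖ : ‖ϖF‖ = ‖ϖE‖ ^ e := by rw [← hiso, hram]
  have hlevel := norm_le_pow_iff_norm_le_pow_of_norm_eq_pow hF0 hF1 hFmax
    (norm_pos_iff.mpr hE0) hE1 hϖ hr hkr
  have hentry := Matrix.norm_map_sub_one_apply (ι := Fin n) (algebraMap F E) hiso
  ext A
  constructor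
  · rintro ⟨hA, hfix⟩
    obtain ⟨B, rfl⟩ := Matrix.exists_map_algebraMap_eq_of_map_eq hθgen hfix
    exact ⟨B, fun i j => (hlevel _).mp (hentry B i j ▸ hA i j), rfl⟩
  · rintro ⟨B, hB, rfl⟩
    exact ⟨fun i j => hentry B i j ▸ (hlevel _).mpr (hB i j),
      Matrix.map_algebraMap_map_algEquiv B θ⟩

/-- For a cyclic extension `E/F` of `p`-adic fields with ramification index `e`,
the `θ`-fixed part of the principal congruence subgroup `K_E(m) = 1 + ϖ_E^m M_n(O_E)` equals
`K_F(k+1)` if `r ≠ 0` and `K_F(k)` if `r = 0`, where `m = k e + r`, `0 ≤ r < e`. -/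
theorem stmt0 {p : ℕ} [Fact p.Prime] (n : ℕ)
    (F E : Type*) [NontriviallyNormedField F] [NontriviallyNormedField E]
    [NormedAlgebra ℚ_[p] F] [FiniteDimensional ℚ_[p] F]
    [Algebra F E] [FiniteDimensional F E] [IsGalois F E]
    (hiso : ∀ x : F, ‖algebraMap F E x‖ = ‖x‖)
    (θ : E ≃ₐ[F] E) (hθgen : ∀ σ : E ≃ₐ[F] E, σ ∈ Subgroup.zpowers θ)
    (ϖE : E) (hE0 : ϖE ≠ 0) (hE1 : ‖ϖE‖ < 1) (hEmax : ∀ x : E, ‖x‖ < 1 → ‖x‖ ≤ ‖ϖE‖)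
    (ϖF : F) (hF0 : ϖF ≠ 0) (hF1 : ‖ϖF‖ < 1) (hFmax : ∀ x : F, ‖x‖ < 1 → ‖x‖ ≤ ‖ϖF‖)
    (e : ℕ) (he : 0 < e) (hram : ‖algebraMap F E ϖF‖ = ‖ϖE‖ ^ e)
    (m k r : ℕ) (hm : 0 < m) (hr : r < e) (hkr : m = k * e + r) :
    {A : Matrix (Fin n) (Fin n) E |
        (∀ i j, ‖(A - 1) i j‖ ≤ ‖ϖE‖ ^ m) ∧ A.map ⇑θ = A} =
      (fun B : Matrix (Fin n) (Fin n) F => B.map (algebraMap F E)) ''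
        {B : Matrix (Fin n) (Fin n) F |
          ∀ i j, ‖(B - 1) i j‖ ≤ ‖ϖF‖ ^ (if r = 0 then k else k + 1)} :=
  stmt0_general n F E hiso θ hθgen ϖE hE0 hE1 ϖF hF0 hF1 hFmax e hram m k r hr hkr
end

section
/- Let G be a topological group, p a prime, and d a positive integer with gcd(p, d) = 1. Suppose h₁, h₂ ∈ G are topologically unipotent (i.e., h^{p^n} → 1 as n → ∞) and g ∈ G satisfies (g⁻¹ h₁ g)^d = h₂^d. Then g⁻¹ h₁ g = h₂, provided g⁻¹ h₁ g is also topologically unipotent. -/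
/-!
If `n ≡ 1 (mod d)`, say `n = 1 + d c`, then `x^d = y^d` gives `x^n y = x (y^d)^c y = x y^n`.
By Euler's theorem every `n = p^(φ(d) m)` qualifies, and letting `m → ∞` turns the left side
into `y` and the right side into `x`.
-/

open Filter Topology

theorem pow_mul_eq_mul_pow_of_modEq_one {G : Type*} [Group G] {x y : G} {d n : ℕ}
    (heq : x ^ d = y ^ d) (hn : n ≡ 1 [MOD d]) : x ^ n * y = x * y ^ n := by
  obtain ⟨c, hc⟩ := Nat.modEq_iff_dvd.mp hn.symm
  have hn' : (n : ℤ) = 1 + d * c := by omega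
  rw [← zpow_natCast, ← zpow_natCast y, hn', zpow_add, zpow_one, zpow_mul, zpow_natCast, heq,
    add_comm, zpow_add y, zpow_one, zpow_mul, zpow_natCast, mul_assoc]

theorem eq_of_pow_eq_of_tendsto_pow_pow {G : Type*} [Group G] [TopologicalSpace G]
    [ContinuousMul G] [T2Space G] {p d : ℕ} {x y : G} (hd : 0 < d) (hpd : p.Coprime d)
    (hx : Tendsto (fun m : ℕ => x ^ p ^ m) atTop (𝓝 1))
    (hy : Tendsto (fun m : ℕ => y ^ p ^ m) atTop (𝓝 1))
    (heq : x ^ d = y ^ d) : x = y := by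
  have hmod (m : ℕ) : p ^ (d.totient * m) ≡ 1 [MOD d] := by
    simpa only [pow_mul, one_pow] using (Nat.ModEq.pow_totient hpd).pow m
  have hexp : Tendsto (fun m : ℕ => d.totient * m) atTop atTop :=
    tendsto_id.const_mul_atTop' (Nat.totient_pos.mpr hd)
  have hleft : Tendsto (fun m : ℕ => x ^ p ^ (d.totient * m) * y) atTop (𝓝 (1 * y)) :=
    (hx.comp hexp).mul_const y
  have hright : Tendsto (fun m : ℕ => x * y ^ p ^ (d.totient * m)) atTop (𝓝 (x * 1)) :=
    (hy.comp hexp).const_mul x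
  simp only [pow_mul_eq_mul_pow_of_modEq_one heq (hmod _)] at hleft
  simpa using tendsto_nhds_unique hright hleft

theorem stmt1_general {G : Type*} [Group G] [TopologicalSpace G] [IsTopologicalGroup G] [T2Space G]
    (p d : ℕ) (hd : 0 < d) (hpd : Nat.Coprime p d)
    (h₁ h₂ g : G)
    (H2 : Filter.Tendsto (fun m : ℕ => h₂ ^ p ^ m) Filter.atTop (nhds 1))
    (H3 : Filter.Tendsto (fun m : ℕ => (g⁻¹ * h₁ * g) ^ p ^ m) Filter.atTop (nhds 1))
    (heq : (g⁻¹ * h₁ * g) ^ d = h₂ ^ d) :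
    g⁻¹ * h₁ * g = h₂ :=
  eq_of_pow_eq_of_tendsto_pow_pow hd hpd H3 H2 heq

/-- In a Hausdorff topological group, if `h₁, h₂` are topologically unipotent,
`g⁻¹ h₁ g` is topologically unipotent, `gcd(p,d)=1` and `(g⁻¹ h₁ g)^d = h₂^d`,
then `g⁻¹ h₁ g = h₂`. -/
theorem stmt1 {G : Type*} [Group G] [TopologicalSpace G] [IsTopologicalGroup G] [T2Space G]
    (p d : ℕ) (hp : p.Prime) (hd : 0 < d) (hpd : Nat.Coprime p d)
    (h₁ h₂ g : G)
    (H1 : Filter.Tendsto (fun m : ℕ => h₁ ^ p ^ m) Filter.atTop (nhds 1))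
    (H2 : Filter.Tendsto (fun m : ℕ => h₂ ^ p ^ m) Filter.atTop (nhds 1))
    (H3 : Filter.Tendsto (fun m : ℕ => (g⁻¹ * h₁ * g) ^ p ^ m) Filter.atTop (nhds 1))
    (heq : (g⁻¹ * h₁ * g) ^ d = h₂ ^ d) :
    g⁻¹ * h₁ * g = h₂ :=
  stmt1_general p d hd hpd h₁ h₂ g H2 H3 heq
end

section
/- Let E/F be a cyclic degree-d extension of p-adic fields, p prime to d, θ a generator of Gal(E/F). Let H(F)_{tu} denote topologically unipotent elements of GL_n(F) and let U = {g(h⋊θ)g⁻¹ : g ∈ GL_n(E), h ∈ H(F)_{tu}} inside the twisted space G̃(F) = GL_n(E) ⋊ θ. Then the map h ↦ h⋊θ induces a bijection from GL_n(F)-conjugacy classes in H(F)_{tu} to GL_n(E)-twisted-conjugacy classes in U. -/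
/-!
Write `x ⋊ θ` for `x ∈ GL_n(E)`. If `g (h₁ ⋊ θ) g⁻¹ = h₂ ⋊ θ` with `h₁, h₂` fixed by `θ`, then
taking `d`-th powers in the semidirect product (where `θ ^ d = 1`) gives `g h₁ ^ d g⁻¹ = h₂ ^ d`.
So `h₁ ^ d` and `h₂ ^ d` are conjugate over `E`, hence over `F` by some `k ∈ GL_n(F)`: the
determinant of a generic `F`-combination of the coordinates of `g` in a basis of `E/F` is a
nonzero polynomial, and `F` is infinite. Since `p ∤ d`, there are arbitrarily large `p`-powers
`N = d c + 1`, and `h₂ ^ N k h₁ = h₂ k h₁ ^ N`; for topologically unipotent `h₁, h₂`, letting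
`N → ∞` gives `k h₁ = h₂ k`.
-/

open Filter Topology

namespace SemiconjBy

variable {M : Type*} [Monoid M]

theorem pow_mul_add_one {k x y : M} {d : ℕ} (h : SemiconjBy k (x ^ d) (y ^ d)) (c : ℕ) :
    y ^ (d * c + 1) * (k * x) = y * k * x ^ (d * c + 1) := by
  rw [pow_succ', pow_mul, mul_assoc, ← mul_assoc _ k, ← (h.pow_right c).eq, pow_succ, pow_mul]
  simp only [mul_assoc]

variable [TopologicalSpace M] [ContinuousMul M] [T2Space M]

theorem of_pow_of_tendsto {k x y : M} {d : ℕ} {N : ℕ → ℕ} (hN : ∀ t, ∃ c, N t = d * c + 1)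
    (hx : Tendsto (fun t ↦ x ^ N t) atTop (𝓝 1)) (hy : Tendsto (fun t ↦ y ^ N t) atTop (𝓝 1))
    (h : SemiconjBy k (x ^ d) (y ^ d)) : SemiconjBy k x y := by
  have hl : Tendsto (fun t ↦ y ^ N t * (k * x)) atTop (𝓝 (k * x)) := by
    simpa using hy.mul_const (k * x)
  have hr : Tendsto (fun t ↦ y ^ N t * (k * x)) atTop (𝓝 (y * k)) := by
    refine (by simpa using hx.const_mul (y * k) :
      Tendsto (fun t ↦ y * k * x ^ N t) atTop (𝓝 (y * k))).congr fun t ↦ ?_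
    obtain ⟨c, hc⟩ := hN t
    rw [hc, h.pow_mul_add_one]
  exact tendsto_nhds_unique hl hr

theorem of_pow_of_tendsto_pow_prime_pow {p d : ℕ} (hp : p.Prime) (hpd : ¬ p ∣ d) {k x y : M}
    (hx : Tendsto (fun m ↦ x ^ p ^ m) atTop (𝓝 1)) (hy : Tendsto (fun m ↦ y ^ p ^ m) atTop (𝓝 1))
    (h : SemiconjBy k (x ^ d) (y ^ d)) : SemiconjBy k x y := by
  have hd : d ≠ 0 := by rintro rfl; exact hpd (dvd_zero p)
  have hφ : Tendsto (fun t ↦ d.totient * t) atTop atTop :=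
    tendsto_id.const_mul_atTop' (Nat.totient_pos.mpr (Nat.pos_of_ne_zero hd))
  refine of_pow_of_tendsto (N := fun t ↦ p ^ (d.totient * t)) (fun t ↦ ?_)
    (hx.comp hφ) (hy.comp hφ) h
  have hmod : 1 ≡ p ^ (d.totient * t) [MOD d] := by
    simpa [pow_mul] using ((Nat.ModEq.pow_totient
      ((Nat.Prime.coprime_iff_not_dvd hp).mpr hpd)).pow t).symm
  obtain ⟨c, hc⟩ := (Nat.modEq_iff_dvd' (Nat.one_le_pow _ _ hp.pos)).mp hmod
  exact ⟨c, Nat.eq_add_of_sub_eq (Nat.one_le_pow _ _ hp.pos) hc⟩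

end SemiconjBy

theorem MonoidHom.pow_mul_iterate_apply {M : Type*} [Monoid M] (φ : M →* M) {g x y : M}
    (hx : φ x = x) (hy : φ y = y) (h : y * φ g = g * x) (j : ℕ) :
    y ^ j * φ^[j] g = g * x ^ j := by
  induction j with
  | zero => simp
  | succ j ih =>
    have hj : y * φ^[j + 1] g = φ^[j] g * x := by
      have := congrArg φ^[j] h
      rwa [iterate_map_mul, iterate_map_mul, Function.iterate_fixed hx,
        Function.iterate_fixed hy, ← Function.iterate_succ_apply] at this
    rw [pow_succ, mul_assoc, hj, ← mul_assoc, ih, pow_succ, mul_assoc]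

namespace Matrix

variable {n ι F : Type*} [Fintype n] [Fintype ι] [Field F]

theorem map_linearMap_map_algebraMap_mul {E : Type*} [CommRing E] [Algebra F E]
    (f : E →ₗ[F] F) (A : Matrix n n F) (G : Matrix n n E) :
    (A.map (algebraMap F E) * G).map f = A * G.map f := by
  ext a b
  simp [mul_apply, ← Algebra.smul_def]

theorem map_linearMap_mul_map_algebraMap {E : Type*} [CommRing E] [Algebra F E]
    (f : E →ₗ[F] F) (G : Matrix n n E) (B : Matrix n n F) :
    (G * B.map (algebraMap F E)).map f = G.map f * B := by
  ext a b
  simp only [map_apply, mul_apply, map_sum]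
  refine Finset.sum_congr rfl fun c _ ↦ ?_
  rw [← Algebra.commutes, ← Algebra.smul_def, map_smul, smul_eq_mul, mul_comm]

variable [DecidableEq n]

theorem aeval_det_sum_X_smul {S : Type*} [CommRing S] [Algebra F S]
    (C : ι → Matrix n n F) (e : ι → S) :
    MvPolynomial.aeval e
        (∑ j, (MvPolynomial.X j : MvPolynomial ι F) • (C j).map MvPolynomial.C).det =
      (∑ j, e j • (C j).map (algebraMap F S)).det := by
  rw [AlgHom.map_det, map_sum]
  congr 2 with j : 1
  ext a b
  simp

theorem exists_isUnit_sum_smul_of_isUnit_sum_smul_map [Infinite F] {E : Type*} [CommRing E]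
    [Nontrivial E] [Algebra F E] (C : ι → Matrix n n F) (e : ι → E)
    (he : IsUnit (∑ j, e j • (C j).map (algebraMap F E))) :
    ∃ w : ι → F, IsUnit (∑ j, w j • C j) := by
  obtain ⟨P, hE, hF⟩ : ∃ P : MvPolynomial ι F,
      MvPolynomial.aeval e P = (∑ j, e j • (C j).map (algebraMap F E)).det ∧
        ∀ w, MvPolynomial.eval w P = (∑ j, w j • C j).det :=
    ⟨_, aeval_det_sum_X_smul C e, fun w ↦ by
      simpa [MvPolynomial.coe_aeval_eq_eval] using aeval_det_sum_X_smul C w⟩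
  have hP : P ≠ 0 := by
    rintro rfl
    rw [map_zero] at hE
    exact not_isUnit_zero (hE ▸ (isUnit_iff_isUnit_det _).mp he)
  obtain ⟨w, hw⟩ : ∃ w, MvPolynomial.eval w P ≠ 0 := by
    by_contra! h
    exact hP (MvPolynomial.funext fun w ↦ by rw [h w, map_zero])
  refine ⟨w, (isUnit_iff_isUnit_det _).mpr (isUnit_iff_ne_zero.mpr ?_)⟩
  rwa [← hF]

theorem exists_isUnit_mul_eq_mul_of_map [Infinite F] {E : Type*} [CommRing E] [Nontrivial E]
    [Algebra F E] [Module.Finite F E] {A B : Matrix n n F} {G : Matrix n n E} (hG : IsUnit G)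
    (h : A.map (algebraMap F E) * G = G * B.map (algebraMap F E)) :
    ∃ K : Matrix n n F, IsUnit K ∧ A * K = K * B := by
  let b := Module.finBasis F E
  let C j := G.map (b.coord j)
  have hC : ∀ j, A * C j = C j * B := fun j ↦ by
    rw [← map_linearMap_map_algebraMap_mul, h, map_linearMap_mul_map_algebraMap]
  have hG' : G = ∑ j, b j • (C j).map (algebraMap F E) := by
    ext a c
    conv_lhs => rw [← b.sum_repr (G a c)]
    rw [sum_apply]
    refine Finset.sum_congr rfl fun j _ ↦ ?_
    simp only [C, smul_apply, map_apply, Module.Basis.coord_apply, Algebra.smul_def,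
      Algebra.algebraMap_self, RingHom.id_apply, mul_comm]
  obtain ⟨w, hw⟩ := exists_isUnit_sum_smul_of_isUnit_sum_smul_map C b (hG' ▸ hG)
  refine ⟨∑ j, w j • C j, hw, ?_⟩
  simp only [Finset.mul_sum, Finset.sum_mul, mul_smul_comm, smul_mul_assoc, hC]

theorem exists_semiconjBy_of_semiconjBy_unitsMap [Infinite F] {E : Type*} [CommRing E]
    [Nontrivial E] [Algebra F E] [Module.Finite F E] {x y : (Matrix n n F)ˣ}
    {g : (Matrix n n E)ˣ}
    (h : SemiconjBy g (Units.map (algebraMap F E).mapMatrix.toMonoidHom x)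
      (Units.map (algebraMap F E).mapMatrix.toMonoidHom y)) :
    ∃ k : (Matrix n n F)ˣ, SemiconjBy k x y := by
  obtain ⟨K, hK, hKxy⟩ := exists_isUnit_mul_eq_mul_of_map g.isUnit (congrArg Units.val h.eq).symm
  exact ⟨hK.unit, Units.ext hKxy.symm⟩

end Matrix

theorem AlgEquiv.iterate_unitsMap_mapMatrix_eq_self {F E n : Type*} [Fintype n] [DecidableEq n]
    [CommSemiring F] [Semiring E] [Algebra F E] {θ : E ≃ₐ[F] E} {d : ℕ} (hθ : θ ^ d = 1)
    (g : (Matrix n n E)ˣ) :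
    (Units.map (θ.mapMatrix (m := n)).toAlgHom.toRingHom.toMonoidHom)^[d] g = g := by
  have key : ∀ j a b,
      ((Units.map (θ.mapMatrix (m := n)).toAlgHom.toRingHom.toMonoidHom)^[j] g : Matrix n n E) a b =
        (θ ^ j) (g a b) := by
    intro j a b
    induction j with
    | zero => rfl
    | succ j ih =>
      rw [Function.iterate_succ_apply', pow_succ', AlgEquiv.mul_apply, ← ih]
      rfl
  ext a b
  rw [key, hθ, AlgEquiv.one_apply]

theorem stmt11_general {p : ℕ} [Fact p.Prime]
    (F E : Type*) [NontriviallyNormedField F] [NontriviallyNormedField E]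
    [Algebra F E] [FiniteDimensional F E] [IsGalois F E]
    (θ : E ≃ₐ[F] E)
    (d : ℕ) (hd : d = Module.finrank F E) (hpd : ¬ p ∣ d) (n : ℕ)
    (ι : (Matrix (Fin n) (Fin n) F)ˣ →* (Matrix (Fin n) (Fin n) E)ˣ)
    (hι : ι = Units.map (RingHom.mapMatrix (m := Fin n) (algebraMap F E)).toMonoidHom)
    (θG : (Matrix (Fin n) (Fin n) E)ˣ →* (Matrix (Fin n) (Fin n) E)ˣ)
    (hθG : θG = Units.map
      ((AlgEquiv.mapMatrix (m := Fin n) θ).toAlgHom.toRingHom.toMonoidHom)) :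
    (∀ h₁ h₂ : (Matrix (Fin n) (Fin n) F)ˣ,
      Filter.Tendsto (fun m : ℕ => h₁ ^ p ^ m) Filter.atTop (nhds 1) →
      Filter.Tendsto (fun m : ℕ => h₂ ^ p ^ m) Filter.atTop (nhds 1) →
      ((∃ k : (Matrix (Fin n) (Fin n) F)ˣ, h₂ = k * h₁ * k⁻¹) ↔
       (∃ g : (Matrix (Fin n) (Fin n) E)ˣ, ι h₂ = g * ι h₁ * (θG g)⁻¹))) ∧
    (∀ u : (Matrix (Fin n) (Fin n) E)ˣ,
      (∃ g : (Matrix (Fin n) (Fin n) E)ˣ, ∃ h : (Matrix (Fin n) (Fin n) F)ˣ,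
        Filter.Tendsto (fun m : ℕ => h ^ p ^ m) Filter.atTop (nhds 1) ∧
        u = g * ι h * (θG g)⁻¹) →
      ∃ h' : (Matrix (Fin n) (Fin n) F)ˣ,
        Filter.Tendsto (fun m : ℕ => h' ^ p ^ m) Filter.atTop (nhds 1) ∧
        ∃ g' : (Matrix (Fin n) (Fin n) E)ˣ, u = g' * ι h' * (θG g')⁻¹) := by
  have hθd : θ ^ d = 1 := by
    rw [hd, ← IsGalois.card_aut_eq_finrank]
    exact pow_card_eq_one'
  have hfix : ∀ h, θG (ι h) = ι h := fun h ↦ by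
    ext a b
    simp [hι, hθG]
  refine ⟨fun h₁ h₂ hT₁ hT₂ ↦ ⟨?_, ?_⟩, fun u ⟨g, h, hh, hu⟩ ↦ ⟨h, hh, g, hu⟩⟩
  · rintro ⟨k, rfl⟩
    exact ⟨ι k, by rw [hfix, map_mul, map_mul, map_inv]⟩
  · rintro ⟨g, hg⟩
    have hgd : SemiconjBy g (ι (h₁ ^ d)) (ι (h₂ ^ d)) := by
      have := θG.pow_mul_iterate_apply (hfix h₁) (hfix h₂) (by rw [hg, inv_mul_cancel_right]) d
      rw [hθG, AlgEquiv.iterate_unitsMap_mapMatrix_eq_self hθd] at this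
      rw [SemiconjBy, map_pow, map_pow, this]
    obtain ⟨k, hk⟩ := Matrix.exists_semiconjBy_of_semiconjBy_unitsMap (hι ▸ hgd)
    exact ⟨k, eq_mul_inv_of_mul_eq
      (hk.of_pow_of_tendsto_pow_prime_pow Fact.out hpd hT₁ hT₂).eq.symm⟩

/-- For `E/F` cyclic of degree `d` with `p ∤ d` and generator `θ`, the map
`h ↦ h⋊θ` induces a bijection from `GL_n(F)`-conjugacy classes of topologically unipotent
elements of `GL_n(F)` onto `GL_n(E)`-twisted-conjugacy classes in
`U = {g(h⋊θ)g⁻¹ : g ∈ GL_n(E), h ∈ GL_n(F)_tu}`: two topologically unipotent elements of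
`GL_n(F)` are twisted-conjugate under `GL_n(E)` iff conjugate under `GL_n(F)`, and every
element of `U` is twisted-conjugate to some `h⋊θ` with `h ∈ GL_n(F)_tu`. -/
theorem stmt11 {p : ℕ} [Fact p.Prime]
    (F E : Type*) [NontriviallyNormedField F] [NontriviallyNormedField E]
    [NormedAlgebra ℚ_[p] F] [FiniteDimensional ℚ_[p] F]
    [Algebra F E] [FiniteDimensional F E] [IsGalois F E]
    (θ : E ≃ₐ[F] E) (hθgen : ∀ σ : E ≃ₐ[F] E, σ ∈ Subgroup.zpowers θ)
    (d : ℕ) (hd : d = Module.finrank F E) (hpd : ¬ p ∣ d) (n : ℕ)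
    (ι : (Matrix (Fin n) (Fin n) F)ˣ →* (Matrix (Fin n) (Fin n) E)ˣ)
    (hι : ι = Units.map (RingHom.mapMatrix (m := Fin n) (algebraMap F E)).toMonoidHom)
    (θG : (Matrix (Fin n) (Fin n) E)ˣ →* (Matrix (Fin n) (Fin n) E)ˣ)
    (hθG : θG = Units.map
      ((AlgEquiv.mapMatrix (m := Fin n) θ).toAlgHom.toRingHom.toMonoidHom)) :
    (∀ h₁ h₂ : (Matrix (Fin n) (Fin n) F)ˣ,
      Filter.Tendsto (fun m : ℕ => h₁ ^ p ^ m) Filter.atTop (nhds 1) →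
      Filter.Tendsto (fun m : ℕ => h₂ ^ p ^ m) Filter.atTop (nhds 1) →
      ((∃ k : (Matrix (Fin n) (Fin n) F)ˣ, h₂ = k * h₁ * k⁻¹) ↔
       (∃ g : (Matrix (Fin n) (Fin n) E)ˣ, ι h₂ = g * ι h₁ * (θG g)⁻¹))) ∧
    (∀ u : (Matrix (Fin n) (Fin n) E)ˣ,
      (∃ g : (Matrix (Fin n) (Fin n) E)ˣ, ∃ h : (Matrix (Fin n) (Fin n) F)ˣ,
        Filter.Tendsto (fun m : ℕ => h ^ p ^ m) Filter.atTop (nhds 1) ∧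
        u = g * ι h * (θG g)⁻¹) →
      ∃ h' : (Matrix (Fin n) (Fin n) F)ˣ,
        Filter.Tendsto (fun m : ℕ => h' ^ p ^ m) Filter.atTop (nhds 1) ∧
        ∃ g' : (Matrix (Fin n) (Fin n) E)ˣ, u = g' * ι h' * (θG g')⁻¹) :=
  stmt11_general F E θ d hd hpd n ι hι θG hθG
end

section
/- Let F be a p-adic field with p odd, and let L ⊂ M_n(F) be an O_F-lattice consisting of topologically nilpotent elements with L·L ⊂ ϖ_F L. Then K_L := c(L) = 1 + L is a compact open subgroup of GL_n(F) consisting of topologically unipotent elements, where c is the Cayley transform. -/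
/-!
Since `L * L ⊆ ϖ L`, the power `X ^ (k + 1)` of `X ∈ L` lies in `ϖ ^ k L`, so the geometric series
`∑ X ^ k` converges and, `L` being compact, `(1 - X)⁻¹ ∈ 1 + L`; together with
`(1 + X)(1 + Y) = 1 + (X + Y + XY)` this makes `1 + L` a group of units. As `2` is a unit of `𝒪_F`
for odd `p`, both factors of the Cayley transform of `X ∈ L` lie in `1 + L`, and every `A ∈ 1 + L`
is the Cayley transform of `(A - 1)(1 + (A - 1)/2)⁻¹ ∈ L`. Finally `p ∈ ϖ 𝒪_F`, so writing
`B ^ p - 1 = (B - 1) ∑_{i < p} B ^ i` shows `(1 + ϖ ^ m L) ^ p ⊆ 1 + ϖ ^ (m + 1) L`, whence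
`A ^ (p ^ m) → 1`.
-/

open Filter Topology

/-- The Cayley transform `c(X) = (1 + X/2)(1 - X/2)⁻¹` on matrices. -/
noncomputable def cayley {F : Type*} [Field F] {n : ℕ}
    (X : Matrix (Fin n) (Fin n) F) : Matrix (Fin n) (Fin n) F :=
  (1 + (2⁻¹ : F) • X) * Ring.inverse (1 - (2⁻¹ : F) • X)

section

variable {𝕜 R : Type*} [NormedField 𝕜] [NormedRing R] [NormedAlgebra 𝕜 R]

/-- Models the paper's lattices `L` with `L·L ⊂ ϖ L`; the ring of integers `𝒪_𝕜` appears as the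
closed unit ball of `𝕜`. -/
structure IsContractingLattice (ϖ : 𝕜) (S : AddSubgroup R) : Prop where
  norm_lt_one : ‖ϖ‖ < 1
  smul_mem : ∀ a : 𝕜, ‖a‖ ≤ 1 → ∀ X ∈ S, a • X ∈ S
  mul_eq_smul : ∀ X ∈ S, ∀ Y ∈ S, ∃ Z ∈ S, X * Y = ϖ • Z
  isCompact : IsCompact (S : Set R)

namespace IsContractingLattice

variable {ϖ : 𝕜} {S : AddSubgroup R} {X Y A B : R}

theorem mul_mem (hS : IsContractingLattice ϖ S) (hX : X ∈ S) (hY : Y ∈ S) : X * Y ∈ S := by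
  obtain ⟨Z, hZ, hXY⟩ := hS.mul_eq_smul X hX Y hY
  exact hXY ▸ hS.smul_mem ϖ hS.norm_lt_one.le Z hZ

theorem exists_pow_succ_eq_smul (hS : IsContractingLattice ϖ S) (hX : X ∈ S) (k : ℕ) :
    ∃ Z ∈ S, X ^ (k + 1) = ϖ ^ k • Z := by
  induction k with
  | zero => exact ⟨X, hX, by simp⟩
  | succ k ih =>
    obtain ⟨Z, hZ, hXk⟩ := ih
    obtain ⟨Z', hZ', hZX⟩ := hS.mul_eq_smul Z hZ X hX
    exact ⟨Z', hZ', by rw [pow_succ, hXk, smul_mul_assoc, hZX, smul_smul, ← pow_succ]⟩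

theorem norm_pow_le_one (hS : IsContractingLattice ϖ S) (k : ℕ) : ‖ϖ ^ k‖ ≤ 1 := by
  rw [norm_pow]
  exact pow_le_one₀ (norm_nonneg ϖ) hS.norm_lt_one.le

theorem pow_succ_mem (hS : IsContractingLattice ϖ S) (hX : X ∈ S) (k : ℕ) : X ^ (k + 1) ∈ S := by
  obtain ⟨Z, hZ, hXk⟩ := hS.exists_pow_succ_eq_smul hX k
  exact hXk ▸ hS.smul_mem _ (hS.norm_pow_le_one k) Z hZ

theorem exists_hasSum_pow_succ (hS : IsContractingLattice ϖ S) (hX : X ∈ S) :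
    ∃ Y ∈ S, HasSum (fun k => X ^ (k + 1)) Y := by
  obtain ⟨C, hC⟩ := isBounded_iff_forall_norm_le.mp hS.isCompact.isBounded
  have hbound (k : ℕ) : ‖X ^ (k + 1)‖ ≤ C * ‖ϖ‖ ^ k := by
    obtain ⟨Z, hZ, hXk⟩ := hS.exists_pow_succ_eq_smul hX k
    rw [hXk, norm_smul, norm_pow, mul_comm]
    exact mul_le_mul_of_nonneg_right (hC Z hZ) (by positivity)
  exact cauchySeq_tendsto_of_isComplete hS.isCompact.isComplete
    (fun s => sum_mem fun k _ => hS.pow_succ_mem hX k) <| cauchySeq_finset_of_norm_bounded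
      ((summable_geometric_of_lt_one (norm_nonneg ϖ) hS.norm_lt_one).mul_left C) hbound

theorem summable_pow (hS : IsContractingLattice ϖ S) (hX : X ∈ S) : Summable (X ^ ·) := by
  obtain ⟨_, _, hXY⟩ := hS.exists_hasSum_pow_succ hX
  exact (summable_nat_add_iff 1).mp hXY.summable

noncomputable def oneSubUnit (hS : IsContractingLattice ϖ S) (hX : X ∈ S) : Rˣ :=
  ⟨1 - X, ∑' i, X ^ i, (hS.summable_pow hX).one_sub_mul_tsum_pow,
    (hS.summable_pow hX).tsum_pow_mul_one_sub⟩

theorem isUnit_one_sub (hS : IsContractingLattice ϖ S) (hX : X ∈ S) : IsUnit (1 - X) :=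
  (hS.oneSubUnit hX).isUnit

theorem inverse_one_sub_sub_one_mem (hS : IsContractingLattice ϖ S) (hX : X ∈ S) :
    Ring.inverse (1 - X) - 1 ∈ S := by
  rw [show 1 - X = (hS.oneSubUnit hX : R) from rfl, Ring.inverse_unit]
  change ∑' i, X ^ i - 1 ∈ S
  obtain ⟨Y, hY, hXY⟩ := hS.exists_hasSum_pow_succ hX
  rw [(hS.summable_pow hX).tsum_eq_zero_add, pow_zero, add_sub_cancel_left, hXY.tsum_eq]
  exact hY

theorem mul_sub_one_mem (hS : IsContractingLattice ϖ S) (hA : A - 1 ∈ S) (hB : B - 1 ∈ S) :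
    A * B - 1 ∈ S := by
  rw [show A * B - 1 = (A - 1) + (B - 1) + (A - 1) * (B - 1) by noncomm_ring]
  exact add_mem (add_mem hA hB) (hS.mul_mem hA hB)

theorem isUnit_of_sub_one_mem (hS : IsContractingLattice ϖ S) (hA : A - 1 ∈ S) : IsUnit A := by
  simpa using hS.isUnit_one_sub (neg_mem hA)

theorem inverse_sub_one_mem (hS : IsContractingLattice ϖ S) (hA : A - 1 ∈ S) :
    Ring.inverse A - 1 ∈ S := by
  simpa using hS.inverse_one_sub_sub_one_mem (neg_mem hA)

theorem exists_pow_eq_one_add_smul (hS : IsContractingLattice ϖ S) {c : 𝕜} (hc : ‖c‖ ≤ 1)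
    {U : R} (hU : U ∈ S) (i : ℕ) : ∃ V ∈ S, (1 + c • U) ^ i = 1 + c • V := by
  induction i with
  | zero => exact ⟨0, zero_mem S, by simp⟩
  | succ i ih =>
    obtain ⟨V, hV, hBi⟩ := ih
    refine ⟨V + U + c • (V * U),
      add_mem (add_mem hV hU) (hS.smul_mem c hc _ (hS.mul_mem hV hU)), ?_⟩
    rw [pow_succ, hBi]
    simp only [mul_add, add_mul, one_mul, mul_one, smul_mul_smul_comm, smul_add, smul_smul]
    abel

theorem exists_pow_eq_one_add_mul_smul (hS : IsContractingLattice ϖ S) (hϖ : ϖ ≠ 0) {q : ℕ}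
    (hq : ‖(q : 𝕜)‖ ≤ ‖ϖ‖) {c : 𝕜} (hc : ‖c‖ ≤ 1) {U : R} (hU : U ∈ S) :
    ∃ U' ∈ S, (1 + c • U) ^ q = 1 + (c * ϖ) • U' := by
  choose V hVS hV using hS.exists_pow_eq_one_add_smul hc hU
  have hW : ∑ i ∈ Finset.range q, V i ∈ S := sum_mem fun i _ => hVS i
  obtain ⟨Z, hZ, hUW⟩ := hS.mul_eq_smul U hU _ hW
  have hqϖ : ‖(q : 𝕜) * ϖ⁻¹‖ ≤ 1 := by
    rw [norm_mul, norm_inv, ← div_eq_mul_inv]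
    exact div_le_one_of_le₀ hq (norm_nonneg ϖ)
  refine ⟨((q : 𝕜) * ϖ⁻¹) • U + c • Z,
    add_mem (hS.smul_mem _ hqϖ U hU) (hS.smul_mem c hc Z hZ), ?_⟩
  have hsum : ∑ i ∈ Finset.range q, (1 + c • U) ^ i =
      (q : 𝕜) • 1 + c • ∑ i ∈ Finset.range q, V i := by
    rw [Finset.sum_congr rfl fun i _ => hV i, Finset.sum_add_distrib, Finset.sum_const,
      Finset.card_range, ← Finset.smul_sum, Nat.cast_smul_eq_nsmul]
  rw [← sub_eq_iff_eq_add', ← mul_geom_sum, add_sub_cancel_left, hsum, mul_add, smul_mul_smul_comm,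
    smul_mul_smul_comm, hUW, mul_one, smul_smul, smul_add, smul_smul, smul_smul]
  congr 2
  · field_simp
  · ring

theorem exists_pow_pow_eq_one_add_smul (hS : IsContractingLattice ϖ S) (hϖ : ϖ ≠ 0) {q : ℕ}
    (hq : ‖(q : 𝕜)‖ ≤ ‖ϖ‖) (hA : A - 1 ∈ S) (m : ℕ) : ∃ Z ∈ S, A ^ q ^ m = 1 + ϖ ^ m • Z := by
  induction m with
  | zero => exact ⟨A - 1, hA, by simp⟩
  | succ m ih =>
    obtain ⟨Z, hZ, hAm⟩ := ih
    obtain ⟨Z', hZ', hZq⟩ := hS.exists_pow_eq_one_add_mul_smul hϖ hq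
      (hS.norm_pow_le_one m) hZ
    exact ⟨Z', hZ', by rw [pow_succ, pow_mul, hAm, hZq, ← pow_succ]⟩

theorem tendsto_pow_pow_nhds_one (hS : IsContractingLattice ϖ S) (hϖ : ϖ ≠ 0) {q : ℕ}
    (hq : ‖(q : 𝕜)‖ ≤ ‖ϖ‖) (hA : A - 1 ∈ S) : Tendsto (fun m : ℕ => A ^ q ^ m) atTop (𝓝 1) := by
  obtain ⟨C, hC⟩ := isBounded_iff_forall_norm_le.mp hS.isCompact.isBounded
  choose Z hZS hZ using hS.exists_pow_pow_eq_one_add_smul hϖ hq hA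
  have hgeom := (tendsto_pow_atTop_nhds_zero_of_lt_one (norm_nonneg ϖ) hS.norm_lt_one).mul_const C
  rw [zero_mul] at hgeom
  refine tendsto_iff_norm_sub_tendsto_zero.mpr <|
    squeeze_zero (fun _ => norm_nonneg _) (fun m => ?_) hgeom
  rw [hZ, add_sub_cancel_left, norm_smul, norm_pow]
  exact mul_le_mul_of_nonneg_left (hC _ (hZS m)) (by positivity)

end IsContractingLattice

end

attribute [local instance] Matrix.linftyOpNormedRing Matrix.linftyOpNormedAlgebra

namespace IsContractingLattice

variable {F : Type*} [NormedField F] {n : ℕ} {ϖ : F}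
  {S : AddSubgroup (Matrix (Fin n) (Fin n) F)} {X A : Matrix (Fin n) (Fin n) F}

theorem cayley_sub_one_mem (hS : IsContractingLattice ϖ S) (h2 : ‖(2 : F)‖ = 1) (hX : X ∈ S) :
    cayley X - 1 ∈ S := by
  have hX2 : (2⁻¹ : F) • X ∈ S := hS.smul_mem _ (by simp [h2]) X hX
  exact hS.mul_sub_one_mem (by simpa using hX2) (hS.inverse_one_sub_sub_one_mem hX2)

/-- The inverse Cayley transform: `A = c(X)` for `X = (A - 1)(1 + (A - 1)/2)⁻¹`. -/
theorem exists_cayley_eq (hS : IsContractingLattice ϖ S) (h2 : ‖(2 : F)‖ = 1) (hA : A - 1 ∈ S) :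
    ∃ X ∈ S, cayley X = A := by
  set U := A - 1
  have hU2 : (2⁻¹ : F) • -U ∈ S := hS.smul_mem _ (by simp [h2]) _ (neg_mem hA)
  have hD : 1 - (2⁻¹ : F) • -U = 1 + (2⁻¹ : F) • U := by rw [smul_neg, sub_neg_eq_add]
  set V := Ring.inverse (1 + (2⁻¹ : F) • U)
  have hDunit := hD ▸ hS.isUnit_one_sub hU2
  have hDV : (1 + (2⁻¹ : F) • U) * V = 1 := Ring.mul_inverse_cancel _ hDunit
  have hVD : V * (1 + (2⁻¹ : F) • U) = 1 := Ring.inverse_mul_cancel _ hDunit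
  have hV : V - 1 ∈ S := by simpa only [hD] using hS.inverse_one_sub_sub_one_mem hU2
  refine ⟨U * V, by simpa [mul_sub] using add_mem hA (hS.mul_mem hA hV), ?_⟩
  have half : (2⁻¹ : F) + 2⁻¹ = 1 := by
    rw [← two_mul, mul_inv_cancel₀ (by simpa using ne_of_eq_of_ne h2 one_ne_zero)]
  have hminus : 1 - (2⁻¹ : F) • (U * V) = V := by
    rw [← hDV, add_mul, one_mul, smul_mul_assoc, add_sub_cancel_right]
  have hplus : 1 + (2⁻¹ : F) • (U * V) = A * V := by
    rw [← hDV, add_mul, one_mul, smul_mul_assoc, add_assoc, ← add_smul, half, one_smul,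
      ← one_add_mul, add_sub_cancel]
  rw [cayley, hminus, hplus, Ring.inverse_unit ⟨V, _, hVD, hDV⟩, Units.inv_mk, mul_assoc, hVD,
    mul_one]

theorem image_cayley (hS : IsContractingLattice ϖ S) (h2 : ‖(2 : F)‖ = 1) :
    cayley '' S = {A | A - 1 ∈ S} := by
  ext A
  constructor
  · rintro ⟨X, hX, rfl⟩
    exact hS.cayley_sub_one_mem h2 hX
  · intro hA
    obtain ⟨X, hX, rfl⟩ := hS.exists_cayley_eq h2 hA
    exact ⟨X, hX, rfl⟩

end IsContractingLattice

theorem norm_two_eq_one_of_padic {p : ℕ} [Fact p.Prime] (hp2 : p ≠ 2) {F : Type*} [NormedField F]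
    [NormedAlgebra ℚ_[p] F] : ‖(2 : F)‖ = 1 := by
  rw [← map_ofNat (algebraMap ℚ_[p] F) 2, norm_algebraMap', ← Nat.cast_ofNat,
    Padic.norm_natCast_eq_one_iff]
  exact (Nat.coprime_primes Fact.out Nat.prime_two).mpr hp2

theorem norm_natCast_lt_one_of_padic (p : ℕ) [Fact p.Prime] {F : Type*} [NormedField F]
    [NormedAlgebra ℚ_[p] F] : ‖(p : F)‖ < 1 := by
  rw [← map_natCast (algebraMap ℚ_[p] F), norm_algebraMap', Padic.norm_natCast_lt_one_iff]

theorem stmt12_general {p : ℕ} [Fact p.Prime] (hp2 : p ≠ 2)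
    (F : Type*) [NontriviallyNormedField F] [NormedAlgebra ℚ_[p] F]
    (ϖ : F) (hϖ0 : ϖ ≠ 0) (hϖ1 : ‖ϖ‖ < 1) (hϖmax : ∀ x : F, ‖x‖ < 1 → ‖x‖ ≤ ‖ϖ‖)
    (n : ℕ) (L : Set (Matrix (Fin n) (Fin n) F))
    (h0 : (0 : Matrix (Fin n) (Fin n) F) ∈ L)
    (hadd : ∀ X ∈ L, ∀ Y ∈ L, X + Y ∈ L)
    (hneg : ∀ X ∈ L, -X ∈ L)
    (hsmul : ∀ a : F, ‖a‖ ≤ 1 → ∀ X ∈ L, a • X ∈ L)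
    (hcpt : IsCompact L) (hopen : IsOpen L)
    (hmul : ∀ X ∈ L, ∀ Y ∈ L, ∃ Z ∈ L, X * Y = ϖ • Z)
    (K : Set (Matrix (Fin n) (Fin n) F))
    (hK : K = {A : Matrix (Fin n) (Fin n) F | A - 1 ∈ L}) :
    (∀ X ∈ L, IsUnit (1 - (2⁻¹ : F) • X)) ∧
    cayley '' L = K ∧
    (∀ A ∈ K, IsUnit A) ∧
    (1 : Matrix (Fin n) (Fin n) F) ∈ K ∧
    (∀ A ∈ K, ∀ B ∈ K, A * B ∈ K) ∧
    (∀ A ∈ K, Ring.inverse A ∈ K) ∧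
    IsCompact K ∧ IsOpen K ∧
    (∀ A ∈ K, Filter.Tendsto (fun m : ℕ => A ^ p ^ m) Filter.atTop (nhds 1)) := by
  subst hK
  obtain ⟨S, rfl⟩ : ∃ S : AddSubgroup (Matrix (Fin n) (Fin n) F), (S : Set _) = L :=
    ⟨{ carrier := L
       zero_mem' := h0
       add_mem' := fun {X Y} hX hY => hadd X hX Y hY
       neg_mem' := hneg _ }, rfl⟩
  have hS : IsContractingLattice ϖ S := ⟨hϖ1, hsmul, hmul, hcpt⟩
  have h2 : ‖(2 : F)‖ = 1 := norm_two_eq_one_of_padic hp2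
  have hp : ‖(p : F)‖ ≤ ‖ϖ‖ := hϖmax _ (norm_natCast_lt_one_of_padic p)
  exact ⟨fun X hX => hS.isUnit_one_sub (hS.smul_mem _ (by simp [h2]) X hX), hS.image_cayley h2,
    fun A => hS.isUnit_of_sub_one_mem, by simp, fun A hA B => hS.mul_sub_one_mem hA,
    fun A => hS.inverse_sub_one_mem, (Homeomorph.subRight 1).isCompact_preimage.mpr hcpt,
    hopen.preimage (continuous_sub_right 1), fun A => hS.tendsto_pow_pow_nhds_one hϖ0 hp⟩

/-- For an `O_F`-lattice `L ⊂ M_n(F)` of topologically nilpotent elements with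
`L·L ⊂ ϖ_F L` (`p` odd), the set `K_L := c(L) = 1 + L` is a compact open subgroup of
`GL_n(F)` consisting of topologically unipotent elements. -/
theorem stmt12 {p : ℕ} [Fact p.Prime] (hp2 : p ≠ 2)
    (F : Type*) [NontriviallyNormedField F] [NormedAlgebra ℚ_[p] F]
    [FiniteDimensional ℚ_[p] F] [IsUltrametricDist F]
    (ϖ : F) (hϖ0 : ϖ ≠ 0) (hϖ1 : ‖ϖ‖ < 1) (hϖmax : ∀ x : F, ‖x‖ < 1 → ‖x‖ ≤ ‖ϖ‖)
    (n : ℕ) (L : Set (Matrix (Fin n) (Fin n) F))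
    (h0 : (0 : Matrix (Fin n) (Fin n) F) ∈ L)
    (hadd : ∀ X ∈ L, ∀ Y ∈ L, X + Y ∈ L)
    (hneg : ∀ X ∈ L, -X ∈ L)
    (hsmul : ∀ a : F, ‖a‖ ≤ 1 → ∀ X ∈ L, a • X ∈ L)
    (hspan : Submodule.span F L = ⊤)
    (hcpt : IsCompact L) (hopen : IsOpen L)
    (htn : ∀ X ∈ L, Filter.Tendsto (fun m : ℕ => X ^ p ^ m) Filter.atTop (nhds 0))
    (hmul : ∀ X ∈ L, ∀ Y ∈ L, ∃ Z ∈ L, X * Y = ϖ • Z)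
    (K : Set (Matrix (Fin n) (Fin n) F))
    (hK : K = {A : Matrix (Fin n) (Fin n) F | A - 1 ∈ L}) :
    (∀ X ∈ L, IsUnit (1 - (2⁻¹ : F) • X)) ∧
    cayley '' L = K ∧
    (∀ A ∈ K, IsUnit A) ∧
    (1 : Matrix (Fin n) (Fin n) F) ∈ K ∧
    (∀ A ∈ K, ∀ B ∈ K, A * B ∈ K) ∧
    (∀ A ∈ K, Ring.inverse A ∈ K) ∧
    IsCompact K ∧ IsOpen K ∧
    (∀ A ∈ K, Filter.Tendsto (fun m : ℕ => A ^ p ^ m) Filter.atTop (nhds 1)) :=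
  stmt12_general hp2 F ϖ hϖ0 hϖ1 hϖmax n L h0 hadd hneg hsmul hcpt hopen hmul K hK
end

section
/- Let E/F be cyclic of degree d with p ∤ d, and let γ ∈ GL_n(F) be topologically unipotent. If γ' ∈ GL_n(F) is the unique topologically unipotent d-th root of γ (which exists since γ ↦ γ^d is a homeomorphism on topologically unipotent elements), then N_{E/F}(γ') = γ'^d = γ when γ' is viewed in GL_n(E); in particular every topologically unipotent element of GL_n(F) is a norm from GL_n(E). -/
/-!
Since `p ∤ d`, there are `a_m` with `d * a_m ≡ 1 [MOD p ^ m]`. In an ultrametric normed ring a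
topologically unipotent `g` has bounded powers, and `‖g ^ a - g ^ b‖ ≤ C ^ 2 * ‖g ^ p ^ N - 1‖`
whenever `a ≡ b [MOD p ^ N]`; hence `g ^ a_m` is Cauchy. Its limit `g'` is topologically
unipotent with `g' ^ d = lim g ^ (d * a_m) = g`, and any topologically unipotent `d`-th root
`x` of `g` equals `lim x ^ (d * a_m) = lim g ^ a_m = g'`. Applied to `GL_n(F)` with the
entrywise sup norm, the root has entries in `F`, so it is fixed by `θ` and its norm is its
`d`-th power.
-/

open Filter Topology

def TopologicallyUnipotent {M : Type*} [Monoid M] [TopologicalSpace M] (p : ℕ) (g : M) : Prop :=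
  Tendsto (fun m : ℕ => g ^ p ^ m) atTop (𝓝 1)

theorem Nat.modEq_of_mul_modEq_one {d x y q : ℕ} (hx : d * x ≡ 1 [MOD q])
    (hy : d * y ≡ 1 [MOD q]) : x ≡ y [MOD q] :=
  calc x = x * 1 := (mul_one x).symm
    _ ≡ x * (d * y) [MOD q] := hy.symm.mul_left x
    _ = y * (d * x) := by ring
    _ ≡ y * 1 [MOD q] := hx.mul_left y
    _ = y := mul_one y

theorem TopologicallyUnipotent.tendsto_norm_pow_sub_one {R : Type*} [SeminormedRing R] {p : ℕ}
    {g : R} (hg : TopologicallyUnipotent p g) :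
    Tendsto (fun m : ℕ => ‖g ^ p ^ m - 1‖) atTop (𝓝 0) :=
  tendsto_iff_norm_sub_tendsto_zero.1 hg

section UltrametricRing

variable {R : Type*} [NormedRing R] [IsUltrametricDist R]

theorem norm_pow_sub_one_le_mul {x : R} {C : ℝ} (hC : ∀ i, ‖x ^ i‖ ≤ C) (t : ℕ) :
    ‖x ^ t - 1‖ ≤ C * ‖x - 1‖ := by
  rw [← geom_sum_mul]
  refine (norm_mul_le _ _).trans (mul_le_mul_of_nonneg_right ?_ (norm_nonneg _))
  exact IsUltrametricDist.norm_sum_le_of_forall_le_of_nonneg ((norm_nonneg _).trans (hC 0))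
    fun i _ => hC i

theorem norm_pow_sub_pow_le_of_modEq {g : R} {C : ℝ} (hC : ∀ k, ‖g ^ k‖ ≤ C) {q a b : ℕ}
    (h : a ≡ b [MOD q]) : ‖g ^ a - g ^ b‖ ≤ C * (C * ‖g ^ q - 1‖) := by
  wlog hab : a ≤ b generalizing a b
  · rw [norm_sub_rev]
    exact this h.symm (le_of_not_ge hab)
  obtain ⟨t, ht⟩ := (Nat.modEq_iff_dvd' hab).1 h
  have hb : b = a + q * t := by omega
  rw [norm_sub_rev, hb, pow_add, pow_mul, ← mul_sub_one]
  refine (norm_mul_le _ _).trans (mul_le_mul (hC a) ?_ (norm_nonneg _)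
    ((norm_nonneg _).trans (hC 0)))
  exact norm_pow_sub_one_le_mul (fun i => by rw [← pow_mul]; exact hC _) t

variable {p : ℕ} {g : R}

theorem TopologicallyUnipotent.exists_forall_norm_pow_le (h1 : ‖(1 : R)‖ ≤ 1) (hp : 0 < p)
    (hg : TopologicallyUnipotent p g) : ∃ C, ∀ k, ‖g ^ k‖ ≤ C := by
  obtain ⟨N, hN⟩ := ((hg.sub_const 1).norm.eventually
    (ge_mem_nhds (by simp : ‖(1 : R) - 1‖ < 1))).exists
  set q := p ^ N
  have hq : 0 < q := pow_pos hp N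
  have hgq : ‖g ^ q‖ ≤ 1 := by
    simpa using (IsUltrametricDist.norm_add_le_max (g ^ q - 1) 1).trans (max_le hN h1)
  have hgqi : ∀ i, ‖(g ^ q) ^ i‖ ≤ 1 := fun
    | 0 => by simpa using h1
    | i + 1 => (norm_pow_le' _ i.succ_pos).trans (pow_le_one₀ (norm_nonneg _) hgq)
  refine ⟨∑ r ∈ Finset.range q, ‖g ^ r‖, fun k => ?_⟩
  calc ‖g ^ k‖ = ‖(g ^ q) ^ (k / q) * g ^ (k % q)‖ := by
        rw [← pow_mul, ← pow_add, Nat.div_add_mod]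
    _ ≤ 1 * ‖g ^ (k % q)‖ := (norm_mul_le _ _).trans
        (mul_le_mul_of_nonneg_right (hgqi _) (norm_nonneg _))
    _ ≤ ∑ r ∈ Finset.range q, ‖g ^ r‖ := by
        rw [one_mul]
        exact Finset.single_le_sum (fun r _ => norm_nonneg (g ^ r))
          (Finset.mem_range.2 (Nat.mod_lt k hq))

theorem TopologicallyUnipotent.tendsto_pow_of_modEq (h1 : ‖(1 : R)‖ ≤ 1) (hp : 0 < p)
    (hg : TopologicallyUnipotent p g) {b : ℕ → ℕ} {c : ℕ} (hb : ∀ m, b m ≡ c [MOD p ^ m]) :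
    Tendsto (fun m => g ^ b m) atTop (𝓝 (g ^ c)) := by
  obtain ⟨C, hC⟩ := hg.exists_forall_norm_pow_le h1 hp
  rw [tendsto_iff_norm_sub_tendsto_zero]
  refine squeeze_zero (fun _ => norm_nonneg _)
    (fun m => norm_pow_sub_pow_le_of_modEq hC (hb m)) ?_
  simpa using (hg.tendsto_norm_pow_sub_one.const_mul C).const_mul C

theorem TopologicallyUnipotent.cauchySeq_pow (h1 : ‖(1 : R)‖ ≤ 1) (hp : 0 < p)
    (hg : TopologicallyUnipotent p g) {a : ℕ → ℕ}
    (ha : ∀ N n, N ≤ n → a N ≡ a n [MOD p ^ N]) : CauchySeq fun m => g ^ a m := by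
  obtain ⟨C, hC⟩ := hg.exists_forall_norm_pow_le h1 hp
  refine cauchySeq_of_le_tendsto_0' (fun N => C * (C * ‖g ^ p ^ N - 1‖))
    (fun N n hNn => ?_) ?_
  · rw [dist_eq_norm]
    exact norm_pow_sub_pow_le_of_modEq hC (ha N n hNn)
  · simpa using (hg.tendsto_norm_pow_sub_one.const_mul C).const_mul C

theorem TopologicallyUnipotent.of_tendsto_pow (h1 : ‖(1 : R)‖ ≤ 1) (hp : 0 < p)
    (hg : TopologicallyUnipotent p g) {a : ℕ → ℕ} {g' : R}
    (hlim : Tendsto (fun m => g ^ a m) atTop (𝓝 g')) : TopologicallyUnipotent p g' := by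
  obtain ⟨C, hC⟩ := hg.exists_forall_norm_pow_le h1 hp
  have hbound : ∀ N, ‖g' ^ p ^ N - 1‖ ≤ C * ‖g ^ p ^ N - 1‖ := fun N =>
    le_of_tendsto' (((hlim.pow (p ^ N)).sub_const 1).norm) fun m => by
      rw [← pow_mul, mul_comm, pow_mul]
      exact norm_pow_sub_one_le_mul (fun i => by rw [← pow_mul]; exact hC _) _
  rw [TopologicallyUnipotent, tendsto_iff_norm_sub_tendsto_zero]
  exact squeeze_zero (fun _ => norm_nonneg _) hbound
    (by simpa using hg.tendsto_norm_pow_sub_one.const_mul C)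

theorem TopologicallyUnipotent.existsUnique_pow_eq [CompleteSpace R] (h1 : ‖(1 : R)‖ ≤ 1)
    (hp : 0 < p) {d : ℕ} (hd : d.Coprime p) (hg : TopologicallyUnipotent p g) :
    ∃! g' : R, TopologicallyUnipotent p g' ∧ g' ^ d = g := by
  choose a _ ha using fun m => Nat.exists_mul_mod_eq_of_coprime 1 (hd.pow_right m)
    (pow_ne_zero m hp.ne')
  replace ha : ∀ m, d * a m ≡ 1 [MOD p ^ m] := ha
  have hcompat : ∀ N n, N ≤ n → a N ≡ a n [MOD p ^ N] := fun N n hNn =>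
    Nat.modEq_of_mul_modEq_one (ha N) ((ha n).of_dvd (pow_dvd_pow p hNn))
  obtain ⟨g', hlim⟩ := cauchySeq_tendsto_of_complete (hg.cauchySeq_pow h1 hp hcompat)
  refine ⟨g', ⟨hg.of_tendsto_pow h1 hp hlim, ?_⟩, fun x ⟨hx, hxd⟩ => ?_⟩
  · refine tendsto_nhds_unique (hlim.pow d) ?_
    simpa [← pow_mul, mul_comm] using hg.tendsto_pow_of_modEq h1 hp ha
  · refine tendsto_nhds_unique ?_ hlim
    simpa [← hxd, ← pow_mul] using hx.tendsto_pow_of_modEq h1 hp ha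

end UltrametricRing

theorem Units.topologicallyUnipotent_val_iff {R : Type*} [NormedRing R]
    [HasSummableGeomSeries R] {p : ℕ} {u : Rˣ} :
    TopologicallyUnipotent p (u : R) ↔ TopologicallyUnipotent p u := by
  simp only [TopologicallyUnipotent, Units.isOpenEmbedding_val.isEmbedding.tendsto_nhds_iff,
    Function.comp_def, Units.val_pow_eq_pow_val, Units.val_one]

theorem Units.existsUnique_topologicallyUnipotent_pow_eq {R : Type*} [NormedRing R]
    [IsUltrametricDist R] [CompleteSpace R] (h1 : ‖(1 : R)‖ ≤ 1) {p d : ℕ} (hp : 1 < p)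
    (hd : d.Coprime p) {γ : Rˣ} (hγ : TopologicallyUnipotent p γ) :
    ∃! γ' : Rˣ, TopologicallyUnipotent p γ' ∧ γ' ^ d = γ := by
  obtain ⟨g', ⟨hg'u, hg'd⟩, huniq⟩ :=
    (topologicallyUnipotent_val_iff.2 hγ).existsUnique_pow_eq h1 (by omega) hd
  have hd0 : d ≠ 0 := by
    rintro rfl
    exact hp.ne' (Nat.coprime_zero_left p |>.1 hd)
  have hunit : IsUnit g' := (isUnit_pow_iff hd0).1 (hg'd ▸ γ.isUnit)
  refine ⟨hunit.unit, ⟨topologicallyUnipotent_val_iff.1 hg'u, Units.ext (by simpa using hg'd)⟩,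
    fun u ⟨hu, hud⟩ => Units.ext (huniq u ⟨topologicallyUnipotent_val_iff.2 hu, ?_⟩)⟩
  rw [← Units.val_pow_eq_pow_val, hud]

namespace Matrix

variable {K : Type*} [NormedField K] {m : Type*} [Fintype m]

attribute [local instance] Matrix.normedAddCommGroup

theorem norm_mul_le_of_isUltrametricDist [IsUltrametricDist K] (A B : Matrix m m K) :
    ‖A * B‖ ≤ ‖A‖ * ‖B‖ := by
  rw [norm_le_iff (by positivity)]
  intro i j
  refine IsUltrametricDist.norm_sum_le_of_forall_le_of_nonneg (by positivity) fun k _ => ?_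
  rw [norm_mul]
  exact mul_le_mul (norm_entry_le_entrywise_sup_norm A) (norm_entry_le_entrywise_sup_norm B)
    (norm_nonneg _) (norm_nonneg _)

theorem norm_one_le_one [DecidableEq m] : ‖(1 : Matrix m m K)‖ ≤ 1 := by
  rw [norm_le_iff zero_le_one]
  intro i j
  rw [one_apply]
  split_ifs <;> simp

instance isUltrametricDist [IsUltrametricDist K] : IsUltrametricDist (Matrix m m K) :=
  inferInstanceAs (IsUltrametricDist (m → m → K))

/-- Mathlib's matrix normed rings use operator norms, which are not ultrametric; over an
ultrametric field the entrywise sup norm is, and it is submultiplicative. -/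
abbrev ultrametricNormedRing [IsUltrametricDist K] [DecidableEq m] : NormedRing (Matrix m m K) :=
  { Matrix.normedAddCommGroup, Matrix.instRing with
    norm_mul_le := norm_mul_le_of_isUltrametricDist }

end Matrix

theorem isFixedPt_units_map_mapMatrix {F E m : Type*} [CommSemiring F] [Semiring E]
    [Algebra F E] [Fintype m] [DecidableEq m] (θ : E ≃ₐ[F] E) (x : (Matrix m m F)ˣ) :
    Function.IsFixedPt
      (Units.map ((AlgEquiv.mapMatrix (m := m) θ).toAlgHom.toRingHom.toMonoidHom))
      (Units.map (RingHom.mapMatrix (m := m) (algebraMap F E)).toMonoidHom x) := by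
  ext i j
  simp

theorem List.prod_map_iterate_range_of_isFixedPt {M : Type*} [Monoid M] {f : M → M} {x : M}
    (hx : Function.IsFixedPt f x) (d : ℕ) :
    ((List.range d).map fun i => f^[i] x).prod = x ^ d := by
  rw [List.map_congr_left fun i _ => hx.iterate i]
  simp

theorem stmt15_general {p : ℕ} [Fact p.Prime]
    (F E : Type*) [NontriviallyNormedField F] [NontriviallyNormedField E]
    [NormedAlgebra ℚ_[p] F] [FiniteDimensional ℚ_[p] F]
    [Algebra F E]
    (θ : E ≃ₐ[F] E)
    (d : ℕ) (hpd : ¬ p ∣ d) (n : ℕ)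
    (ι : (Matrix (Fin n) (Fin n) F)ˣ →* (Matrix (Fin n) (Fin n) E)ˣ)
    (hι : ι = Units.map (RingHom.mapMatrix (m := Fin n) (algebraMap F E)).toMonoidHom)
    (θG : (Matrix (Fin n) (Fin n) E)ˣ →* (Matrix (Fin n) (Fin n) E)ˣ)
    (hθG : θG = Units.map
      ((AlgEquiv.mapMatrix (m := Fin n) θ).toAlgHom.toRingHom.toMonoidHom))
    (γ : (Matrix (Fin n) (Fin n) F)ˣ)
    (hγ : Filter.Tendsto (fun m : ℕ => γ ^ p ^ m) Filter.atTop (nhds 1)) :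
    (∃ γ' : (Matrix (Fin n) (Fin n) F)ˣ,
      (Filter.Tendsto (fun m : ℕ => γ' ^ p ^ m) Filter.atTop (nhds 1) ∧ γ' ^ d = γ) ∧
      (∀ γ'' : (Matrix (Fin n) (Fin n) F)ˣ,
        Filter.Tendsto (fun m : ℕ => γ'' ^ p ^ m) Filter.atTop (nhds 1) → γ'' ^ d = γ →
        γ'' = γ') ∧
      ((List.range d).map fun i => (⇑θG)^[i] (ι γ')).prod = ι γ) ∧
    ∃ δ : (Matrix (Fin n) (Fin n) E)ˣ,
      ((List.range d).map fun i => (⇑θG)^[i] δ).prod = ι γ := by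
  subst hι hθG
  have hp : p.Prime := Fact.out
  have : IsUltrametricDist F := IsUltrametricDist.of_normedAlgebra ℚ_[p]
  have : CompleteSpace F := FiniteDimensional.complete ℚ_[p] F
  let : NormedRing (Matrix (Fin n) (Fin n) F) := Matrix.ultrametricNormedRing
  have : @CompleteSpace (Matrix (Fin n) (Fin n) F) PseudoMetricSpace.toUniformSpace :=
    inferInstanceAs (CompleteSpace (Fin n → Fin n → F))
  obtain ⟨γ', ⟨hγ'u, hγ'd⟩, huniq⟩ := Units.existsUnique_topologicallyUnipotent_pow_eq
    Matrix.norm_one_le_one hp.one_lt ((hp.coprime_iff_not_dvd.2 hpd).symm) hγ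
  have hnorm := List.prod_map_iterate_range_of_isFixedPt (isFixedPt_units_map_mapMatrix θ γ') d
  rw [← map_pow, hγ'd] at hnorm
  exact ⟨⟨γ', ⟨hγ'u, hγ'd⟩, fun γ'' hu hd => huniq γ'' ⟨hu, hd⟩, hnorm⟩, _, hnorm⟩

/-- Let `E/F` be cyclic of degree `d`, `p` odd and prime to `d`, with generator
`θ`, and let `γ ∈ GL_n(F)` be topologically unipotent. Then `γ` has a unique topologically
unipotent `d`-th root `γ' ∈ GL_n(F)`, and the abstract norm
`N(γ') = γ'·θ(γ')⋯θ^{d-1}(γ')` (computed in `GL_n(E)`) equals `γ'^d = γ`; in particular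
every topologically unipotent element of `GL_n(F)` is a norm from `GL_n(E)`. -/
theorem stmt15 {p : ℕ} [Fact p.Prime] (hp2 : p ≠ 2)
    (F E : Type*) [NontriviallyNormedField F] [NontriviallyNormedField E]
    [NormedAlgebra ℚ_[p] F] [FiniteDimensional ℚ_[p] F]
    [Algebra F E] [FiniteDimensional F E] [IsGalois F E]
    (θ : E ≃ₐ[F] E) (hθgen : ∀ σ : E ≃ₐ[F] E, σ ∈ Subgroup.zpowers θ)
    (d : ℕ) (hd : d = Module.finrank F E) (hpd : ¬ p ∣ d) (n : ℕ)
    (ι : (Matrix (Fin n) (Fin n) F)ˣ →* (Matrix (Fin n) (Fin n) E)ˣ)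
    (hι : ι = Units.map (RingHom.mapMatrix (m := Fin n) (algebraMap F E)).toMonoidHom)
    (θG : (Matrix (Fin n) (Fin n) E)ˣ →* (Matrix (Fin n) (Fin n) E)ˣ)
    (hθG : θG = Units.map
      ((AlgEquiv.mapMatrix (m := Fin n) θ).toAlgHom.toRingHom.toMonoidHom))
    (γ : (Matrix (Fin n) (Fin n) F)ˣ)
    (hγ : Filter.Tendsto (fun m : ℕ => γ ^ p ^ m) Filter.atTop (nhds 1)) :
    (∃ γ' : (Matrix (Fin n) (Fin n) F)ˣ,
      (Filter.Tendsto (fun m : ℕ => γ' ^ p ^ m) Filter.atTop (nhds 1) ∧ γ' ^ d = γ) ∧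
      (∀ γ'' : (Matrix (Fin n) (Fin n) F)ˣ,
        Filter.Tendsto (fun m : ℕ => γ'' ^ p ^ m) Filter.atTop (nhds 1) → γ'' ^ d = γ →
        γ'' = γ') ∧
      ((List.range d).map fun i => (⇑θG)^[i] (ι γ')).prod = ι γ) ∧
    ∃ δ : (Matrix (Fin n) (Fin n) E)ˣ,
      ((List.range d).map fun i => (⇑θG)^[i] δ).prod = ι γ :=
  stmt15_general F E θ d hpd n ι hι θG hθG γ hγ
end
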